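/- arXiv:1902.04017 — 2 statements merged into one kernel-verified Lean document; each statement's English description precedes it below -/
import Mathlib

section
/- Let β, s, s₁ be reals with 0 < s₁ < s. Suppose ω₀, θ₀ are elements of an ordered real vector space with 0 ≤ ω₀ and suppose -R + e^{-s}(R + ω₀) ≥ β·θ₀ (where R is an element of the vector space, i.e., -(1-e^{-s})R ≥ β·θ₀ - e^{-s}·ω₀). Then -(1-e^{-s₁})R + e^{-s₁}·γ₀ ≥ [(1-e^{-s₁})/(1-e^{-s})]·β·θ₀ whenever γ₀ ≥ ω₀. -/
/-!
Write the hypothesis as `-(1 - e^{-s}) R + e^{-s} ω₀ ≥ β θ₀` and multiply it by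
`(1 - e^{-s₁}) / (1 - e^{-s}) > 0`. The coefficient of `R` becomes `-(1 - e^{-s₁})`, and that of `ω₀`
becomes `(1 - e^{-s₁}) e^{-s} / (1 - e^{-s})`, which is at most `e^{-s₁}` exactly because
`e^{-s} ≤ e^{-s₁}`; as `0 ≤ ω₀ ≤ γ₀`, the `ω₀`-term is then dominated by `e^{-s₁} γ₀`.
-/

open Real

theorem one_sub_div_one_sub_mul_le {x y : ℝ} (hyx : y ≤ x) (hy : y < 1) :
    (1 - x) / (1 - y) * y ≤ x := by
  rw [div_mul_eq_mul_div, div_le_iff₀ (sub_pos.mpr hy)]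
  nlinarith

section OrderedModule

variable {V : Type*} [AddCommGroup V] [PartialOrder V] [IsOrderedAddMonoid V] [Module ℝ V]
  [PosSMulMono ℝ V]

theorem smul_le_neg_smul_add_smul_of_le {a b c d : ℝ} {x R ω γ : V} (ha : 0 ≤ a) (hb : 0 < b)
    (hcd : a / b * c ≤ d) (hd : 0 ≤ d) (hω : 0 ≤ ω) (hγ : ω ≤ γ)
    (h : x ≤ -(b • R) + c • ω) :
    (a / b) • x ≤ -(a • R) + d • γ :=
  calc (a / b) • x ≤ (a / b) • (-(b • R) + c • ω) :=
        smul_le_smul_of_nonneg_left h (div_nonneg ha hb.le)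
    _ = -(a • R) + (a / b * c) • ω := by
        rw [smul_add, smul_neg, smul_smul, smul_smul, div_mul_cancel₀ a hb.ne']
    _ ≤ -(a • R) + d • γ := add_le_add_right (smul_le_smul' hcd hγ hd hω) _

end OrderedModule

theorem stmt_13_general (V : Type*) [AddCommGroup V] [PartialOrder V] [IsOrderedAddMonoid V] [Module ℝ V]
    [PosSMulStrictMono ℝ V]
    (β s s₁ : ℝ) (hs₁ : 0 < s₁) (hss : s₁ < s)
    (ω₀ θ₀ R γ₀ : V) (hω₀ : 0 ≤ ω₀)
    (hpos : -R + Real.exp (-s) • (R + ω₀) ≥ β • θ₀)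
    (hγ : γ₀ ≥ ω₀) :
    -((1 - Real.exp (-s₁)) • R) + Real.exp (-s₁) • γ₀ ≥
      (((1 - Real.exp (-s₁)) / (1 - Real.exp (-s))) * β) • θ₀ := by
  have hee₁ : exp (-s) < exp (-s₁) := exp_lt_exp.mpr (by linarith)
  have he₁ : exp (-s₁) < 1 := exp_lt_one_iff.mpr (by linarith)
  have hpos' : β • θ₀ ≤ -((1 - exp (-s)) • R) + exp (-s) • ω₀ := by
    convert hpos using 1
    module
  rw [mul_smul]
  exact smul_le_neg_smul_add_smul_of_le (sub_nonneg.mpr he₁.le) (sub_pos.mpr (hee₁.trans he₁))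
    (one_sub_div_one_sub_mul_le hee₁.le (hee₁.trans he₁)) (exp_pos _).le hω₀ hγ hpos'

theorem stmt_13 (V : Type*) [AddCommGroup V] [PartialOrder V] [IsOrderedAddMonoid V] [Module ℝ V]
    [PosSMulStrictMono ℝ V] [PosSMulReflectLT ℝ V]
    (β s s₁ : ℝ) (hs₁ : 0 < s₁) (hss : s₁ < s)
    (ω₀ θ₀ R γ₀ : V) (hω₀ : 0 ≤ ω₀)
    (hpos : -R + Real.exp (-s) • (R + ω₀) ≥ β • θ₀)
    (hγ : γ₀ ≥ ω₀) :
    -((1 - Real.exp (-s₁)) • R) + Real.exp (-s₁) • γ₀ ≥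
      (((1 - Real.exp (-s₁)) / (1 - Real.exp (-s))) * β) • θ₀ :=
  stmt_13_general V β s s₁ hs₁ hss ω₀ θ₀ R γ₀ hω₀ hpos hγ
end

section
/- Let f : [0,∞) → ℝ be continuous and suppose there exist 0 < γ₁ < 1 and γ₂ > 0 such that: whenever 0 < α ≤ γ₁ and f(t) ≥ α for all t ∈ [0, γ₂·α^{k}] (k > 0 fixed), it follows that f(t) ≥ γ₁ for all t ∈ [0, γ₂·α^{k}]. If f(0) ≥ σ for some σ > 0, then f(t) ≥ γ₁ for all t ∈ [0, γ₂·γ₁^{k}]. -/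
/-!
Reparametrize the hypothesis by the length `v = γ₂ α^k` of the interval instead of the threshold
`α`. If `f ≥ γ₁` on `[0, s]` with `s < γ₂ γ₁^k`, the threshold belonging to `s` is `< γ₁`, so by
continuity `f` stays above the threshold of some slightly longer interval `[0, v]`; the hypothesis
then upgrades the bound to `γ₁` on `[0, v]`. The same step started from `f 0 ≥ σ > 0` (the threshold
of length `0` is `0`) gives `f 0 ≥ γ₁`, and a supremum argument pushes `s` up to `γ₂ γ₁^k`.
-/

open Set Filter Topology

theorem IsClosed.Icc_subset_of_forall_Icc_subset_exists_gt {α : Type*}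
    [ConditionallyCompleteLinearOrder α] [TopologicalSpace α] [OrderTopology α]
    {a b : α} {s : Set α} (hs : IsClosed (s ∩ Icc a b)) (ha : a ∈ s)
    (hstep : ∀ x ∈ Ico a b, Icc a x ⊆ s → ∃ y ∈ Ioc x b, Icc a y ⊆ s) :
    Icc a b ⊆ s := by
  rcases lt_or_ge b a with hba | hab
  · simp [Icc_eq_empty_of_lt hba]
  set D := {x ∈ Icc a b | Icc a x ⊆ s}
  have haD : a ∈ D := ⟨left_mem_Icc.2 hab, by simpa using ha⟩
  have hD : D.Nonempty := ⟨a, haD⟩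
  have hDb : BddAbove D := ⟨b, fun x hx => hx.1.2⟩
  set m := sSup D
  have hm : m ∈ Icc a b := ⟨le_csSup hDb haD, csSup_le hD fun x hx => hx.1.2⟩
  have hDs : D ⊆ s ∩ Icc a b := fun x hx => ⟨hx.2 ⟨hx.1.1, le_rfl⟩, hx.1⟩
  have hms : m ∈ s := (hs.closure_subset_iff.2 hDs (csSup_mem_closure hD hDb)).1
  have hmD : m ∈ D := by
    refine ⟨hm, fun t ht => (eq_or_lt_of_le ht.2).elim (· ▸ hms) fun htm => ?_⟩
    obtain ⟨x, hx, htx⟩ := exists_lt_of_lt_csSup hD htm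
    exact hx.2 ⟨ht.1, htx.le⟩
  rcases eq_or_lt_of_le hm.2 with hmb | hmb
  · exact hmb ▸ hmD.2
  obtain ⟨y, hy, hys⟩ := hstep m ⟨hm.1, hmb⟩ hmD.2
  exact absurd (le_csSup hDb ⟨⟨hm.1.trans hy.1.le, hy.2⟩, hys⟩) hy.1.not_ge

section Bootstrap

variable {f θ : ℝ → ℝ} {γ T : ℝ}

theorem exists_gt_forall_Icc_le_of_bootstrap (hf : ContinuousOn f (Icc 0 T))
    (hθ : ContinuousOn θ (Ico 0 T))
    (hboot : ∀ v ∈ Ioc 0 T, (∀ t ∈ Icc 0 v, θ v ≤ f t) → ∀ t ∈ Icc 0 v, γ ≤ f t)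
    {s c : ℝ} (hs : s ∈ Ico 0 T) (hθc : θ s < c) (hfc : ∀ t ∈ Icc 0 s, c ≤ f t) :
    ∃ v ∈ Ioc s T, ∀ t ∈ Icc 0 v, γ ≤ f t := by
  obtain ⟨β, hθβ, hβc⟩ := exists_between hθc
  have hnhds : ∀ {S : Set ℝ}, Ico s T ⊆ S → 𝓝[≥] s ≤ 𝓝[S] s := fun hS =>
    (nhdsWithin_Ico_eq_nhdsGE hs.2).symm.le.trans (nhdsWithin_mono s hS)
  have hfβ : ∀ᶠ v in 𝓝[>] s, ∀ t ∈ Icc 0 v, β ≤ f t := by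
    have hnear : ∀ᶠ t in 𝓝[≥] s, β < f t :=
      hnhds (S := Icc 0 T) (fun t ht => ⟨hs.1.trans ht.1, ht.2.le⟩) <|
        (hf s ⟨hs.1, hs.2.le⟩).eventually
          (eventually_gt_nhds (hβc.trans_le (hfc s ⟨hs.1, le_rfl⟩)))
    obtain ⟨u, hu, hsub⟩ := mem_nhdsGE_iff_exists_Icc_subset.1 hnear
    filter_upwards [Ioc_mem_nhdsGT hu] with v hv t ht
    rcases le_or_gt t s with hts | hst
    · exact hβc.le.trans (hfc t ⟨ht.1, hts⟩)
    · exact (hsub ⟨hst.le, ht.2.trans hv.2⟩).le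
  have hθβ' : ∀ᶠ v in 𝓝[>] s, θ v < β :=
    nhdsWithin_mono s Ioi_subset_Ici_self <|
      hnhds (S := Ico 0 T) (fun t ht => ⟨hs.1.trans ht.1, ht.2⟩) <|
        (hθ s hs).eventually (eventually_lt_nhds hθβ)
  have hsT : ∀ᶠ v in 𝓝[>] s, v ∈ Ioo s T := Ioo_mem_nhdsGT hs.2
  obtain ⟨v, hvT, hfv, hθv⟩ := (hsT.and (hfβ.and hθβ')).exists
  exact ⟨v, ⟨hvT.1, hvT.2.le⟩, hboot v ⟨hs.1.trans_lt hvT.1, hvT.2.le⟩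
    fun t ht => hθv.le.trans (hfv t ht)⟩

theorem forall_Icc_le_of_bootstrap (hT : 0 < T) (hf : ContinuousOn f (Icc 0 T))
    (hθ : ContinuousOn θ (Ico 0 T)) (hθγ : ∀ s ∈ Ico 0 T, θ s < γ)
    (hboot : ∀ v ∈ Ioc 0 T, (∀ t ∈ Icc 0 v, θ v ≤ f t) → ∀ t ∈ Icc 0 v, γ ≤ f t)
    (h0 : θ 0 < f 0) :
    ∀ t ∈ Icc 0 T, γ ≤ f t := by
  have hclosed : IsClosed ({t | γ ≤ f t} ∩ Icc 0 T) := by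
    rw [inter_comm]
    exact hf.preimage_isClosed_of_isClosed isClosed_Icc isClosed_Ici
  have hstart : γ ≤ f 0 := by
    obtain ⟨v, hv, hγ⟩ := exists_gt_forall_Icc_le_of_bootstrap hf hθ hboot
      ⟨le_rfl, hT⟩ h0 fun t ht => by rw [ht.2.antisymm ht.1]
    exact hγ 0 ⟨le_rfl, hv.1.le⟩
  exact hclosed.Icc_subset_of_forall_Icc_subset_exists_gt hstart fun s hs hsγ =>
    exists_gt_forall_Icc_le_of_bootstrap hf hθ hboot hs (hθγ s hs) hsγ

end Bootstrap

theorem stmt_17_general (γ₁ γ₂ k σ : ℝ) (hγ₁ : 0 < γ₁) (hγ₂ : 0 < γ₂)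
    (hk : 0 < k) (hσ : 0 < σ)
    (f : ℝ → ℝ) (hf : ContinuousOn f (Set.Ici 0))
    (hboot : ∀ α : ℝ, 0 < α → α ≤ γ₁ →
      (∀ t ∈ Set.Icc (0 : ℝ) (γ₂ * α ^ k), f t ≥ α) →
      (∀ t ∈ Set.Icc (0 : ℝ) (γ₂ * α ^ k), f t ≥ γ₁))
    (hf0 : f 0 ≥ σ) :
    ∀ t ∈ Set.Icc (0 : ℝ) (γ₂ * γ₁ ^ k), f t ≥ γ₁ := by
  have hpos : ∀ v : ℝ, 0 ≤ v → 0 ≤ v / γ₂ := fun v hv => div_nonneg hv hγ₂.le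
  have hlen : ∀ v : ℝ, 0 ≤ v → γ₂ * ((v / γ₂) ^ k⁻¹) ^ k = v := fun v hv => by
    rw [Real.rpow_inv_rpow (hpos v hv) hk.ne', mul_div_cancel₀ v hγ₂.ne']
  refine forall_Icc_le_of_bootstrap (θ := fun v => (v / γ₂) ^ k⁻¹) (by positivity)
    (hf.mono Icc_subset_Ici_self) ?_ ?_ ?_ ?_
  · exact ((Real.continuous_rpow_const (inv_nonneg.2 hk.le)).comp
      (continuous_id.div_const γ₂)).continuousOn
  · intro s hs
    rw [Real.rpow_inv_lt_iff_of_pos (hpos s hs.1) hγ₁.le hk, div_lt_iff₀' hγ₂]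
    exact hs.2
  · intro v hv hθv
    have hαγ : (v / γ₂) ^ k⁻¹ ≤ γ₁ := by
      rw [Real.rpow_inv_le_iff_of_pos (hpos v hv.1.le) hγ₁.le hk, div_le_iff₀' hγ₂]
      exact hv.2
    simpa only [hlen v hv.1.le] using hboot _ (Real.rpow_pos_of_pos (div_pos hv.1 hγ₂) _) hαγ
      (by simpa only [hlen v hv.1.le] using hθv)
  · simpa [Real.zero_rpow (inv_ne_zero hk.ne')] using hσ.trans_le hf0

theorem stmt_17 (γ₁ γ₂ k σ : ℝ) (hγ₁ : 0 < γ₁) (hγ₁' : γ₁ < 1) (hγ₂ : 0 < γ₂)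
    (hk : 0 < k) (hσ : 0 < σ)
    (f : ℝ → ℝ) (hf : ContinuousOn f (Set.Ici 0))
    (hboot : ∀ α : ℝ, 0 < α → α ≤ γ₁ →
      (∀ t ∈ Set.Icc (0 : ℝ) (γ₂ * α ^ k), f t ≥ α) →
      (∀ t ∈ Set.Icc (0 : ℝ) (γ₂ * α ^ k), f t ≥ γ₁))
    (hf0 : f 0 ≥ σ) :
    ∀ t ∈ Set.Icc (0 : ℝ) (γ₂ * γ₁ ^ k), f t ≥ γ₁ :=
  stmt_17_general γ₁ γ₂ k σ hγ₁ hγ₂ hk hσ f hf hboot hf0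
end
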